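/- Let A and B be real-valued random variables on a probability space such that |A − E[A]| ≤ Δ almost surely for a constant Δ ≥ 0, and B ∈ [l, L] almost surely with 0 < l ≤ L. Then |Cov(A, 1/B)| ≤ |Cov(A, B)| / l² + (Δ/l³) · Var(B). -/

import Mathlib

open MeasureTheory ProbabilityTheory

/-!
Write `μ = E[B]`. Since `1/x` is convex on `(0, ∞)`, `1/B` lies above its tangent line at `μ`:
`1/B = 1/μ − (B − μ)/μ² + R` with `0 ≤ R = (B − μ)²/(B μ²) ≤ (B − μ)²/(l μ²)`.
Taking covariance with `A` kills the constant, turns the linear term into `−Cov(A, B)/μ²`, and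
`Cov(A, R) = E[(A − E[A]) R]` is at most `Δ E[R] ≤ Δ Var(B)/(l μ²)` in absolute value because
`R ≥ 0`. Finally `μ ≥ l`.
-/

/-- Covariance of two real random variables: `Cov(U, V) = E[UV] − E[U]·E[V]`. -/
noncomputable def covar {Ω : Type*} [MeasureSpace Ω] (U V : Ω → ℝ) : ℝ :=
  (∫ ω, U ω * V ω) - (∫ ω, U ω) * (∫ ω, V ω)

/-- Variance of a real random variable: `Var(U) = Cov(U, U)`. -/
noncomputable def var {Ω : Type*} [MeasureSpace Ω] (U : Ω → ℝ) : ℝ := covar U U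

lemma one_div_sub_tangent_eq {b m : ℝ} (hb : b ≠ 0) (hm : m ≠ 0) :
    1 / b - (1 / m - (b - m) / m ^ 2) = (b - m) ^ 2 / (b * m ^ 2) := by
  field_simp
  ring

lemma one_div_sub_tangent_mem_Icc {l b m : ℝ} (hl : 0 < l) (hlb : l ≤ b) (hm : 0 < m) :
    1 / b - (1 / m - (b - m) / m ^ 2) ∈ Set.Icc 0 ((b - m) ^ 2 / (l * m ^ 2)) := by
  have hb : 0 < b := hl.trans_le hlb
  rw [one_div_sub_tangent_eq hb.ne' hm.ne']
  exact ⟨by positivity, div_le_div_of_nonneg_left (sq_nonneg _) (by positivity)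
    (mul_le_mul_of_nonneg_right hlb (sq_nonneg m))⟩

section FiniteMeasure

variable {Ω : Type*} {mΩ : MeasurableSpace Ω} {μ : Measure Ω} [IsFiniteMeasure μ]
  {X : Ω → ℝ} {p : ENNReal}

lemma memLp_of_ae_abs_sub_le {c Δ : ℝ} (hX : AEStronglyMeasurable X μ)
    (hXΔ : ∀ᵐ ω ∂μ, |X ω - c| ≤ Δ) : MemLp X p μ := by
  simpa using (MemLp.of_bound (hX.sub aestronglyMeasurable_const) Δ hXΔ).add (memLp_const c)

lemma memLp_one_div_of_ae_le {l : ℝ} (hX : AEStronglyMeasurable X μ) (hl : 0 < l)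
    (hXl : ∀ᵐ ω ∂μ, l ≤ X ω) : MemLp (fun ω => 1 / X ω) p μ := by
  refine MemLp.of_bound (aestronglyMeasurable_const.div₀ hX) (1 / l) ?_
  filter_upwards [hXl] with ω hω
  rw [Real.norm_of_nonneg (one_div_nonneg.2 (hl.le.trans hω))]
  exact one_div_le_one_div_of_le hl hω

lemma memLp_tangent (hX : MemLp X p μ) (m : ℝ) :
    MemLp (fun ω => 1 / m - (X ω - m) / m ^ 2) p μ := by
  have hXm : MemLp (fun ω => X ω - m) p μ := hX.sub (memLp_const m)
  exact (memLp_const _).sub (by simpa only [div_eq_mul_inv] using hXm.mul_const (m ^ 2)⁻¹)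

end FiniteMeasure

section ProbabilityMeasure

variable {Ω : Type*} {mΩ : MeasurableSpace Ω} {μ : Measure Ω} [IsProbabilityMeasure μ]
  {X Y B : Ω → ℝ} {l Δ : ℝ}

lemma le_integral_of_ae_le (hX : Integrable X μ) (hlX : ∀ᵐ ω ∂μ, l ≤ X ω) : l ≤ μ[X] := by
  simpa using integral_mono_ae (integrable_const l) hX hlX

lemma covariance_eq_integral_sub_mean_mul (hX : MemLp X 2 μ) (hY : MemLp Y 2 μ) :
    cov[X, Y; μ] = ∫ ω, (X ω - μ[X]) * Y ω ∂μ := by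
  have hXc : MemLp (fun ω => X ω - μ[X]) 2 μ := hX.sub (memLp_const _)
  have hXc₀ : μ[fun ω => X ω - μ[X]] = 0 := by
    simp [integral_sub (hX.integrable one_le_two) (integrable_const _)]
  rw [← covariance_sub_const_left (hX.integrable one_le_two) μ[X],
    covariance_eq_sub hXc hY, hXc₀, zero_mul, sub_zero]
  rfl

lemma abs_covariance_le_mul_integral (hX : MemLp X 2 μ) (hY : MemLp Y 2 μ)
    (hXΔ : ∀ᵐ ω ∂μ, |X ω - μ[X]| ≤ Δ) (hY₀ : 0 ≤ᵐ[μ] Y) :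
    |cov[X, Y; μ]| ≤ Δ * μ[Y] := by
  rw [covariance_eq_integral_sub_mean_mul hX hY, ← integral_const_mul, ← Real.norm_eq_abs]
  refine norm_integral_le_of_norm_le ((hY.integrable one_le_two).const_mul Δ) ?_
  filter_upwards [hXΔ, hY₀] with ω hω hω₀
  rw [norm_mul, Real.norm_eq_abs, Real.norm_of_nonneg hω₀]
  exact mul_le_mul_of_nonneg_right hω hω₀

lemma covariance_one_div_eq (hX : MemLp X 2 μ) (hB : MemLp B 2 μ)
    (hB' : MemLp (fun ω => 1 / B ω) 2 μ) (m : ℝ) :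
    cov[X, fun ω => 1 / B ω; μ] =
      -cov[X, B; μ] / m ^ 2 + cov[X, fun ω => 1 / B ω - (1 / m - (B ω - m) / m ^ 2); μ] := by
  have hBm : MemLp (fun ω => B ω - m) 2 μ := hB.sub (memLp_const m)
  rw [covariance_fun_sub_right hX hB' (memLp_tangent hB m),
    covariance_const_sub_right ((hBm.integrable one_le_two).div_const _),
    covariance_fun_div_right, covariance_sub_const_right (hB.integrable one_le_two)]
  ring

lemma integral_one_div_sub_tangent_le (hl : 0 < l) (hB : MemLp B 2 μ)
    (hBl : ∀ᵐ ω ∂μ, l ≤ B ω) :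
    ∫ ω, (1 / B ω - (1 / μ[B] - (B ω - μ[B]) / μ[B] ^ 2)) ∂μ ≤ Var[B; μ] / (l * μ[B] ^ 2) := by
  have hm : 0 < μ[B] := hl.trans_le (le_integral_of_ae_le (hB.integrable one_le_two) hBl)
  have hBm : MemLp (fun ω => B ω - μ[B]) 2 μ := hB.sub (memLp_const _)
  rw [variance_eq_integral hB.aemeasurable, ← integral_div]
  refine integral_mono_ae ?_ (hBm.integrable_sq.div_const _) ?_
  · exact (memLp_one_div_of_ae_le hB.aestronglyMeasurable hl hBl).sub (memLp_tangent hB _)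
      |>.integrable one_le_two
  · filter_upwards [hBl] with ω hω using (one_div_sub_tangent_mem_Icc hl hω hm).2

lemma abs_covariance_one_div_sub_tangent_le (hl : 0 < l) (hΔ : 0 ≤ Δ) (hX : MemLp X 2 μ)
    (hXΔ : ∀ᵐ ω ∂μ, |X ω - μ[X]| ≤ Δ) (hB : MemLp B 2 μ) (hBl : ∀ᵐ ω ∂μ, l ≤ B ω) :
    |cov[X, fun ω => 1 / B ω - (1 / μ[B] - (B ω - μ[B]) / μ[B] ^ 2); μ]|
      ≤ Δ * Var[B; μ] / (l * μ[B] ^ 2) := by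
  have hm : 0 < μ[B] := hl.trans_le (le_integral_of_ae_le (hB.integrable one_le_two) hBl)
  have hB' := memLp_one_div_of_ae_le hB.aestronglyMeasurable hl hBl (p := 2)
  rw [mul_div_assoc]
  refine (abs_covariance_le_mul_integral hX (hB'.sub (memLp_tangent hB _)) hXΔ ?_).trans
    (mul_le_mul_of_nonneg_left (integral_one_div_sub_tangent_le hl hB hBl) hΔ)
  filter_upwards [hBl] with ω hω using (one_div_sub_tangent_mem_Icc hl hω hm).1

end ProbabilityMeasure

section Volume

variable {Ω : Type*} [MeasureSpace Ω] [IsProbabilityMeasure (ℙ : Measure Ω)] {U V : Ω → ℝ}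

lemma covar_eq_covariance (hU : MemLp U 2) (hV : MemLp V 2) : covar U V = cov[U, V] := by
  rw [covariance_eq_sub hU hV]
  rfl

lemma var_eq_variance (hU : MemLp U 2) : var U = Var[U] :=
  (covar_eq_covariance hU hU).trans (covariance_self hU.aemeasurable)

end Volume

theorem cov_with_inverse_refined_bound_general
    {Ω : Type*} [MeasureSpace Ω] [IsProbabilityMeasure (ℙ : Measure Ω)]
    (l L Δ : ℝ) (hl : 0 < l) (hΔ : 0 ≤ Δ)
    (A B : Ω → ℝ) (hAint : Integrable A ℙ) (hBmeas : Measurable B)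
    (hA : ∀ᵐ ω ∂ℙ, |A ω - ∫ ω', A ω'| ≤ Δ)
    (hB : ∀ᵐ ω ∂ℙ, B ω ∈ Set.Icc l L) :
    |covar A (fun ω => 1 / B ω)|
      ≤ |covar A B| / l ^ 2 + (Δ / l ^ 3) * var B := by
  have hBl : ∀ᵐ ω ∂ℙ, l ≤ B ω := hB.mono fun _ h => h.1
  have hA2 : MemLp A 2 ℙ := memLp_of_ae_abs_sub_le hAint.aestronglyMeasurable hA
  have hB2 : MemLp B 2 ℙ := MemLp.of_bound hBmeas.aestronglyMeasurable L <|
    hB.mono fun _ h => (Real.norm_of_nonneg (hl.le.trans h.1)).trans_le h.2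
  have hB2' : MemLp (fun ω => 1 / B ω) 2 ℙ :=
    memLp_one_div_of_ae_le hBmeas.aestronglyMeasurable hl hBl
  have hlm : l ≤ ∫ ω, B ω := le_integral_of_ae_le (hB2.integrable one_le_two) hBl
  have hvar : 0 ≤ Var[B] := variance_nonneg _ _
  rw [covar_eq_covariance hA2 hB2', covar_eq_covariance hA2 hB2, var_eq_variance hB2,
    covariance_one_div_eq hA2 hB2 hB2' (∫ ω, B ω)]
  refine (abs_add_le _ _).trans ?_
  calc _ ≤ |cov[A, B]| / (∫ ω, B ω) ^ 2 + Δ * Var[B] / (l * (∫ ω, B ω) ^ 2) := by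
        rw [abs_div, abs_neg, abs_of_pos (pow_pos (hl.trans_le hlm) 2)]
        gcongr
        exact abs_covariance_one_div_sub_tangent_le hl hΔ hA2 hA hB2 hBl
    _ ≤ |cov[A, B]| / l ^ 2 + Δ * Var[B] / (l * l ^ 2) := by gcongr
    _ = |cov[A, B]| / l ^ 2 + (Δ / l ^ 3) * Var[B] := by ring

/-- If `|A − E[A]| ≤ Δ` almost surely and `B ∈ [l, L]` almost surely with `0 < l ≤ L`,
then `|Cov(A, 1/B)| ≤ |Cov(A, B)|/l² + (Δ/l³)·Var(B)`. -/
theorem cov_with_inverse_refined_bound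
    {Ω : Type*} [MeasureSpace Ω] [IsProbabilityMeasure (ℙ : Measure Ω)]
    (l L Δ : ℝ) (hl : 0 < l) (hlL : l ≤ L) (hΔ : 0 ≤ Δ)
    (A B : Ω → ℝ) (hAint : Integrable A ℙ) (hBmeas : Measurable B)
    (hA : ∀ᵐ ω ∂ℙ, |A ω - ∫ ω', A ω'| ≤ Δ)
    (hB : ∀ᵐ ω ∂ℙ, B ω ∈ Set.Icc l L) :
    |covar A (fun ω => 1 / B ω)|
      ≤ |covar A B| / l ^ 2 + (Δ / l ^ 3) * var B :=
  cov_with_inverse_refined_bound_general l L Δ hl hΔ A B hAint hBmeas hA hB
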